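/- Let t be a good ω-word over S = {1,2,3} of the form t = b₀·b₁·b₂·⋯ where b₀ = 1213 and each bᵢ ∈ {12, 123, 1232, 13, 1323} for i ≥ 1. If b_{i+1} = 13 for some i ≥ 1, then bᵢ = 12. -/

import Mathlib

/-!
Alphabet encodings:
* `S = {1,2,3}` is `Fin 3` with `1 ↦ 0`, `2 ↦ 1`, `3 ↦ 2` (so `1 < 2 < 3` matches `0 < 1 < 2`).
* `T = {a,b,c,d}` is `Fin 4` with `a ↦ 0`, `b ↦ 1`, `c ↦ 2`, `d ↦ 3`.
* `U = {a,c,d}` is `Fin 3` with `a ↦ 0`, `c ↦ 1`, `d ↦ 2` (so `a < c < d` matches `0 < 1 < 2`).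
-/

/-- The six forbidden factors `1231321, 1321231, 2132312, 2312132, 3123213, 3213123`
(images of the letter pattern `xyzxzyx`). -/
def Forbidden : List (List (Fin 3)) :=
  [[0,1,2,0,2,1,0], [0,2,1,0,1,2,0], [1,0,2,1,2,0,1],
   [1,2,0,1,0,2,1], [2,0,1,2,1,0,2], [2,1,0,2,0,1,2]]

/-- A finite word is square-free if it has no nonempty factor `x ++ x`. -/
def SquareFreeL {α : Type*} (w : List α) : Prop :=
  ∀ x : List α, x ≠ [] → ¬ (x ++ x) <:+: w

/-- A finite word over `S` is factor-good if no forbidden factor occurs in it. -/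
def FactorGoodL (w : List (Fin 3)) : Prop :=
  ∀ p ∈ Forbidden, ¬ p <:+: w

/-- A finite word over `S` is good if it is square-free and factor-good. -/
def GoodL (w : List (Fin 3)) : Prop := SquareFreeL w ∧ FactorGoodL w

/-- The factor of an ω-word `w` starting at position `i`, of length `n`. -/
def factorAtN {α : Type*} (w : ℕ → α) (i n : ℕ) : List α :=
  (List.range n).map fun k => w (i + k)

/-- `l` is a (finite) factor of the ω-word `w`. -/
def IsFactorN {α : Type*} (l : List α) (w : ℕ → α) : Prop :=
  ∃ i : ℕ, l = factorAtN w i l.length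

/-- An ω-word is square-free if no nonempty `x ++ x` is a factor of it. -/
def SquareFreeN {α : Type*} (w : ℕ → α) : Prop :=
  ∀ x : List α, x ≠ [] → ¬ IsFactorN (x ++ x) w

/-- An ω-word over `S` is factor-good if no forbidden factor occurs in it. -/
def FactorGoodN (w : ℕ → Fin 3) : Prop :=
  ∀ p ∈ Forbidden, ¬ IsFactorN p w

/-- An ω-word over `S` is good if it is square-free and factor-good. -/
def GoodN (w : ℕ → Fin 3) : Prop := SquareFreeN w ∧ FactorGoodN w

/-- The factor of a ℤ-word `w` starting at position `i`, of length `n`. -/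
def factorAtZ {α : Type*} (w : ℤ → α) (i : ℤ) (n : ℕ) : List α :=
  (List.range n).map fun k => w (i + k)

/-- `l` is a (finite) factor of the ℤ-word `w`. -/
def IsFactorZ {α : Type*} (l : List α) (w : ℤ → α) : Prop :=
  ∃ i : ℤ, l = factorAtZ w i l.length

/-- A ℤ-word is square-free if no nonempty `x ++ x` is a factor of it. -/
def SquareFreeZ {α : Type*} (w : ℤ → α) : Prop :=
  ∀ x : List α, x ≠ [] → ¬ IsFactorZ (x ++ x) w

/-- A ℤ-word over `S` is factor-good if no forbidden factor occurs in it. -/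
def FactorGoodZ (w : ℤ → Fin 3) : Prop :=
  ∀ p ∈ Forbidden, ¬ IsFactorZ p w

/-- A ℤ-word over `S` is good if it is square-free and factor-good. -/
def GoodZ (w : ℤ → Fin 3) : Prop := SquareFreeZ w ∧ FactorGoodZ w

/-- The ω-word `w` is the infinite concatenation `blocks 0 · blocks 1 · blocks 2 ⋯`. -/
def NConcat {α : Type*} (w : ℕ → α) (blocks : ℕ → List α) : Prop :=
  ∃ p : ℕ → ℕ, p 0 = 0 ∧ (∀ i, p (i + 1) = p i + (blocks i).length) ∧
    ∀ i, blocks i = factorAtN w (p i) (blocks i).length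

/-- The ℤ-word `w` is the bi-infinite concatenation `⋯ blocks (-1) · blocks 0 · blocks 1 ⋯`
(up to a shift of indexing). -/
def ZConcat {α : Type*} (w : ℤ → α) (blocks : ℤ → List α) : Prop :=
  ∃ p : ℤ → ℤ, (∀ i, p (i + 1) = p i + (blocks i).length) ∧
    ∀ i, blocks i = factorAtZ w (p i) (blocks i).length

/-- The morphism `f : T* → S*` on letters:
`f(a) = 1213`, `f(b) = 123`, `f(c) = 1323`, `f(d) = 1232`. -/
def fL : Fin 4 → List (Fin 3) := ![[0,1,0,2], [0,1,2], [0,2,1,2], [0,1,2,1]]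

/-- The morphism `f : T* → S*` on finite words. -/
def fW (v : List (Fin 4)) : List (Fin 3) := (v.map fL).flatten

/-- The inclusion `U → T`: `a ↦ a`, `c ↦ c`, `d ↦ d`. -/
def uT : Fin 3 → Fin 4 := ![0, 2, 3]

/-- Does `g` insert the letter `b` between `x` and `y`?  True exactly for the
pairs `ac`, `da`, `dc`. -/
def needB (x y : Fin 3) : Bool :=
  (x == 0 && y == 1) || (x == 2 && y == 0) || (x == 2 && y == 1)

/-- The map `g : U* → T*`, replacing each factor `ac` by `abc`, `da` by `dba`
and `dc` by `dbc`. -/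
def gW : List (Fin 3) → List (Fin 4)
  | [] => []
  | [x] => [uT x]
  | x :: y :: r => (uT x :: (if needB x y then [(1 : Fin 4)] else [])) ++ gW (y :: r)

/-- The block of `f(g(u))` contributed by position `i` of the ω-word `u` over `U`:
the `f`-image of `u i`, followed by `f(b) = 123` when `g` inserts a `b` after `u i`. -/
def fgBlockN (u : ℕ → Fin 3) (i : ℕ) : List (Fin 3) :=
  fL (uT (u i)) ++ (if needB (u i) (u (i + 1)) then fL 1 else [])

/-- The block of `f(g(u))` contributed by position `i` of the ℤ-word `u` over `U`. -/
def fgBlockZ (u : ℤ → Fin 3) (i : ℤ) : List (Fin 3) :=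
  fL (uT (u i)) ++ (if needB (u i) (u (i + 1)) then fL 1 else [])

/-- The letter permutation `π` of `S`: fixes `1`, interchanges `2` and `3`. -/
def pi3 : Fin 3 → Fin 3 := ![0, 2, 1]

/-- Lexicographic order on ω-words: `v ≤ w` iff `v = w` or at the first index
where they differ the letter of `v` is smaller. -/
def LexLeN {α : Type*} [LinearOrder α] (v w : ℕ → α) : Prop :=
  v = w ∨ ∃ n : ℕ, (∀ k < n, v k = w k) ∧ v n < w n

/-!
Every block `bⱼ` with `j ≥ 1` begins with the letter 1. If `bᵢ ≠ 12`, then the factor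
`b_{i-1} · bᵢ · 13 · b_{i+2}` of `t` is not good: `13·13` is a square, `123·13·1` and `1323·13·1`
contain `(31)²`, and `b_{i-1}·1232·13` contains a square or `3123213` whatever `b_{i-1}` is.
Since `GoodL` is decidable, this is a finite check over the possible blocks.
-/

theorem squareFreeL_iff_forall_tails {α : Type*} (w : List α) :
    SquareFreeL w ↔ ∀ u ∈ w.tails, ∀ n < u.length, ¬ u.take (n + 1) ++ u.take (n + 1) <+: u := by
  constructor
  · intro hw u hu n hn hsq
    have hne : u.take (n + 1) ≠ [] := by
      rw [Ne, List.take_eq_nil_iff]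
      rintro (h | rfl) <;> simp_all
    exact hw _ hne (hsq.isInfix.trans ((List.mem_tails _ _).1 hu).isInfix)
  · rintro hw x hx ⟨s, r, rfl⟩
    have hpos : 0 < x.length := List.length_pos_iff.2 hx
    have htake : (x ++ x ++ r).take (x.length - 1 + 1) = x := by
      rw [Nat.sub_add_cancel hpos, List.append_assoc, List.take_left]
    refine hw (x ++ x ++ r) ((List.mem_tails _ _).2 ⟨s, by simp⟩) (x.length - 1)
      (by simp only [List.length_append]; omega) ?_
    rw [htake]
    exact List.prefix_append _ _

instance {α : Type*} [DecidableEq α] : DecidablePred (SquareFreeL (α := α)) :=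
  fun w => decidable_of_iff _ (squareFreeL_iff_forall_tails w).symm

instance : DecidablePred FactorGoodL :=
  fun w => inferInstanceAs (Decidable (∀ p ∈ Forbidden, ¬ p <:+: w))

instance : DecidablePred GoodL :=
  fun w => inferInstanceAs (Decidable (SquareFreeL w ∧ FactorGoodL w))

theorem factorAtN_add {α : Type*} (w : ℕ → α) (i m n : ℕ) :
    factorAtN w i (m + n) = factorAtN w i m ++ factorAtN w (i + m) n := by
  simp only [factorAtN, List.range_add, List.map_append, List.map_map, Function.comp_def,
    add_assoc]

theorem IsFactorN.of_infix {α : Type*} {w : ℕ → α} {l : List α} {i n : ℕ}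
    (h : l <:+: factorAtN w i n) : IsFactorN l w := by
  obtain ⟨s, r, hsr⟩ := h
  have hlen : s.length + l.length + r.length = n := by
    simpa [factorAtN, add_assoc] using congrArg List.length hsr
  refine ⟨i + s.length, ?_⟩
  rw [← hlen, factorAtN_add, factorAtN_add] at hsr
  obtain ⟨hsl, -⟩ := List.append_inj hsr (by simp [factorAtN])
  exact (List.append_inj hsl (by simp [factorAtN])).2

theorem GoodN.goodL_factorAtN {w : ℕ → Fin 3} (hw : GoodN w) (i n : ℕ) :
    GoodL (factorAtN w i n) :=
  ⟨fun x hx hsq => hw.1 x hx (IsFactorN.of_infix hsq),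
    fun q hq hq' => hw.2 q hq (IsFactorN.of_infix hq')⟩

theorem factorAtN_length_add_of_concat {α : Type*} {w : ℕ → α} {b : ℕ → List α} {p : ℕ → ℕ}
    (hp : ∀ i, p (i + 1) = p i + (b i).length)
    (hbp : ∀ i, b i = factorAtN w (p i) (b i).length) (i n : ℕ) :
    factorAtN w (p i) ((b i).length + n) = b i ++ factorAtN w (p (i + 1)) n := by
  rw [factorAtN_add, ← hbp, hp]

def tailBlocks : List (List (Fin 3)) := [[0,1], [0,1,2], [0,1,2,1], [0,2], [0,2,1,2]]

theorem block_eq_12_of_goodL : ∀ y ∈ [0,1,0,2] :: tailBlocks, ∀ x ∈ tailBlocks,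
    ∀ z ∈ tailBlocks, GoodL (y ++ x ++ [0,2] ++ z) → x = [0,1] := by
  decide

/-- For a good ω-word `t = b₀·b₁·b₂⋯` with `b₀ = 1213` and each
`bᵢ ∈ {12,123,1232,13,1323}` for `i ≥ 1`: if `b_{i+1} = 13` for some `i ≥ 1`,
then `bᵢ = 12`. -/
theorem stmt_12 (b : ℕ → List (Fin 3)) (hb0 : b 0 = [0,1,0,2])
    (hb : ∀ i, 1 ≤ i → b i ∈ [[0,1], [0,1,2], [0,1,2,1], [0,2], [0,2,1,2]])
    (t : ℕ → Fin 3) (ht : NConcat t b) (hg : GoodN t)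
    (i : ℕ) (hi : 1 ≤ i) (h13 : b (i + 1) = [0,2]) :
    b i = [0,1] := by
  obtain ⟨p, -, hp, hbp⟩ := ht
  obtain ⟨k, rfl⟩ : ∃ k, i = k + 1 := ⟨i - 1, by omega⟩
  have hprev : b k ∈ [0,1,0,2] :: tailBlocks := by
    rcases k with _ | k
    · simp [hb0]
    · exact List.mem_cons_of_mem _ (hb _ (by omega))
  have hwindow := hg.goodL_factorAtN (p k)
    ((b k).length + ((b (k + 1)).length + ((b (k + 2)).length + (b (k + 3)).length)))
  rw [factorAtN_length_add_of_concat hp hbp, factorAtN_length_add_of_concat hp hbp,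
    factorAtN_length_add_of_concat hp hbp, ← hbp, h13] at hwindow
  exact block_eq_12_of_goodL _ hprev _ (hb _ hi) _ (hb (k + 3) (by omega))
    (by simpa only [List.append_assoc] using hwindow)
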